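/- arXiv:2209.04181 — 2 statements merged into one kernel-verified Lean document; each statement's English description precedes it below -/
import Mathlib

section
/- For any two k-bit vectors X, Y with sign bit 0 (positive), FP(X) > FP(Y) if and only if SI(X) > SI(Y): on nonnegative floats, the floating point ordering coincides with the signed integer ordering of the same bits. -/
/-- Unsigned integer interpretation of a bit vector. -/
def UI {k : ℕ} (B : Fin k → Bool) : ℕ :=
  ∑ i : Fin k, if B i then 2 ^ (i : ℕ) else 0

/-- Two's complement (signed integer) interpretation of a (k+1)-bit vector. -/
def SI {k : ℕ} (B : Fin (k + 1) → Bool) : ℤ :=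
  if B (Fin.last k) then
    -2 ^ k + ∑ i : Fin k, (if B i.castSucc then (2 : ℤ) ^ (i : ℕ) else 0)
  else (UI B : ℤ)

/-- Sign bit of a floating point bit vector of length x + j + 1. -/
def signBit (j x : ℕ) (B : Fin (x + j + 1) → Bool) : Bool := B (Fin.last (x + j))

/-- Unsigned value of the exponent field. -/
def expo (j x : ℕ) (B : Fin (x + j + 1) → Bool) : ℕ :=
  ∑ i : Fin j, if B ⟨x + (i : ℕ), by have := i.isLt; omega⟩ then 2 ^ (i : ℕ) else 0

/-- Unsigned value of the mantissa field. -/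
def mant (j x : ℕ) (B : Fin (x + j + 1) → Bool) : ℕ :=
  ∑ i : Fin x, if B ⟨(i : ℕ), by have := i.isLt; omega⟩ then 2 ^ (i : ℕ) else 0

/-- The exponent bias 2^(j-1) - 1. -/
def bias (j : ℕ) : ℤ := 2 ^ (j - 1) - 1

/-- Floating point magnitude (normalized if exponent field nonzero, else denormalized). -/
def mag (j x : ℕ) (B : Fin (x + j + 1) → Bool) : ℚ :=
  if expo j x B = 0 then
    (2 : ℚ) ^ ((1 : ℤ) - bias j) * (mant j x B) * (2 : ℚ) ^ (-(x : ℤ))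
  else
    (2 : ℚ) ^ ((expo j x B : ℤ) - bias j) * (1 + (mant j x B) * (2 : ℚ) ^ (-(x : ℤ)))

/-- Floating point interpretation, as a signed-magnitude value: the sign is paired
(lexicographically) with the (sign-adjusted) magnitude, so that -0 < +0. -/
def FP (j x : ℕ) (B : Fin (x + j + 1) → Bool) : ℤ ×ₗ ℚ :=
  toLex (if signBit j x B then ((0 : ℤ), -(mag j x B)) else ((1 : ℤ), mag j x B))

/-- The floating point value +0. -/
def fpZero : ℤ ×ₗ ℚ := toLex ((1 : ℤ), (0 : ℚ))

/-- Mask with only the most significant bit set. -/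
def mask (k : ℕ) : Fin (k + 1) → Bool := fun i => decide (i = Fin.last k)

/-- Bitwise XOR of two bit vectors. -/
def xorVec {k : ℕ} (X Y : Fin k → Bool) : Fin k → Bool := fun i => xor (X i) (Y i)

/-- Negation of a floating point value: swap the sign, keep the magnitude. -/
def fpNeg (p : ℤ ×ₗ ℚ) : ℤ ×ₗ ℚ := toLex (1 - (ofLex p).1, -(ofLex p).2)


section FPaux

private lemma mant_lt' (j x : ℕ) (B : Fin (x + j + 1) → Bool) : mant j x B < 2 ^ x := by
  have h1 : mant j x B ≤ ∑ i : Fin x, 2 ^ (i : ℕ) := by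
    apply Finset.sum_le_sum
    intro i _
    split <;> simp
  have h2 : ∑ i : Fin x, 2 ^ (i : ℕ) = 2 ^ x - 1 := by
    rw [Fin.sum_univ_eq_sum_range]
    clear h1 B
    induction x with
    | zero => simp
    | succ n ih =>
      rw [Finset.sum_range_succ, ih]
      have h3 : 0 < 2 ^ n := Nat.pow_pos (by norm_num)
      have h4 : 2 ^ (n+1) = 2 * 2^n := by ring
      omega
  have : 0 < 2 ^ x := Nat.pow_pos (by norm_num)
  omega

private lemma UI_decomp' (j x : ℕ) (B : Fin (x + j + 1) → Bool) (h : B (Fin.last (x + j)) = false) :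
    UI B = mant j x B + 2 ^ x * expo j x B := by
  unfold UI mant expo
  rw [Fin.sum_univ_castSucc, h]
  simp only [Bool.false_eq_true, if_false, add_zero]
  rw [Fin.sum_univ_add]
  refine congrArg₂ (· + ·) ?_ ?_
  · apply Finset.sum_congr rfl
    intro i _
    have hv : (Fin.castAdd j i).castSucc = (⟨(i : ℕ), by have := i.isLt; omega⟩ : Fin (x+j+1)) := by
      ext; simp
    rw [hv]
  · have key : ∀ i : Fin j, (fun i : Fin (x + j) => if B i.castSucc then 2 ^ ((i.castSucc : ℕ)) else 0) (Fin.natAdd x i)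
        = 2 ^ x * (if B ⟨x + (i : ℕ), by have := i.isLt; omega⟩ then 2 ^ (i : ℕ) else 0) := by
      intro i
      have hv : (Fin.natAdd x i).castSucc = (⟨x + (i : ℕ), by have := i.isLt; omega⟩ : Fin (x+j+1)) := by
        ext; simp
      simp only [hv, Fin.coe_castSucc, Fin.coe_natAdd]
      split <;> simp [pow_add]
    calc ∑ i : Fin j, (if B (Fin.natAdd x i).castSucc then 2 ^ (((Fin.natAdd x i).castSucc : ℕ)) else 0)
        = ∑ i : Fin j, 2 ^ x * (if B ⟨x + (i : ℕ), by have := i.isLt; omega⟩ then 2 ^ (i : ℕ) else 0) := by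
          exact Finset.sum_congr rfl (fun i _ => key i)
      _ = 2 ^ x * ∑ i : Fin j, (if B ⟨x + (i : ℕ), by have := i.isLt; omega⟩ then 2 ^ (i : ℕ) else 0) := by
          rw [Finset.mul_sum]

private def gval (x e m : ℕ) : ℕ := if e = 0 then m else 2 ^ (e - 1) * (2 ^ x + m)

private lemma gval_mono_e {x e₁ e₂ m₁ m₂ : ℕ} (hm : m₁ < 2 ^ x) (he : e₁ < e₂) :
    gval x e₁ m₁ < gval x e₂ m₂ := by
  unfold gval
  have h2 : e₂ ≠ 0 := by omega
  rw [if_neg h2]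
  have hp : 0 < 2 ^ (e₂ - 1) := Nat.pow_pos (by norm_num)
  by_cases h1 : e₁ = 0
  · rw [if_pos h1]
    calc m₁ < 2 ^ x := hm
      _ ≤ 2 ^ x + m₂ := Nat.le_add_right _ _
      _ ≤ 2 ^ (e₂ - 1) * (2 ^ x + m₂) := Nat.le_mul_of_pos_left _ hp
  · rw [if_neg h1]
    have hp1 : (0:ℕ) < 2 ^ (e₁ - 1) := Nat.pow_pos (by norm_num)
    calc 2 ^ (e₁ - 1) * (2 ^ x + m₁) < 2 ^ (e₁ - 1) * (2 * 2 ^ x) :=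
          mul_lt_mul_of_pos_left (by omega) hp1
      _ = 2 ^ e₁ * 2 ^ x := by
          rw [← mul_assoc, mul_comm (2 ^ (e₁ - 1)) 2, ← pow_succ']
          congr 2
          omega
      _ ≤ 2 ^ (e₂ - 1) * 2 ^ x := by
          apply Nat.mul_le_mul_right
          apply Nat.pow_le_pow_right (by norm_num)
          omega
      _ ≤ 2 ^ (e₂ - 1) * (2 ^ x + m₂) := by
          apply Nat.mul_le_mul_left
          omega

private lemma gval_mono_m {x e m₁ m₂ : ℕ} (hm : m₁ < m₂) : gval x e m₁ < gval x e m₂ := by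
  unfold gval
  split
  · exact hm
  · have hp : (0:ℕ) < 2 ^ (e - 1) := Nat.pow_pos (by norm_num)
    exact mul_lt_mul_of_pos_left (by omega) hp

private lemma num_mono_e {x e₁ e₂ m₁ m₂ : ℕ} (hm : m₁ < 2 ^ x) (he : e₁ < e₂) :
    m₁ + 2 ^ x * e₁ < m₂ + 2 ^ x * e₂ := by
  have h1 : 2 ^ x * (e₁ + 1) ≤ 2 ^ x * e₂ := Nat.mul_le_mul_left _ (by omega)
  rw [Nat.mul_succ] at h1
  omega

private lemma gval_gt_iff {x e₁ e₂ m₁ m₂ : ℕ} (hm₁ : m₁ < 2 ^ x) (hm₂ : m₂ < 2 ^ x) :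
    gval x e₁ m₁ > gval x e₂ m₂ ↔ m₁ + 2 ^ x * e₁ > m₂ + 2 ^ x * e₂ := by
  rcases lt_trichotomy e₁ e₂ with h | h | h
  · have h1 := gval_mono_e (m₂ := m₂) hm₁ h
    have h2 := num_mono_e (m₂ := m₂) hm₁ h
    constructor <;> intro hh <;> omega
  · subst h
    constructor <;> intro hh
    · rcases lt_trichotomy m₁ m₂ with hm | hm | hm
      · have := gval_mono_m (x := x) (e := e₁) hm
        omega
      · subst hm; omega
      · omega
    · have hm : m₂ < m₁ := by omega
      exact gval_mono_m hm
  · have h1 := gval_mono_e (m₂ := m₁) hm₂ h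
    have h2 := num_mono_e (m₂ := m₁) hm₂ h
    constructor <;> intro hh <;> omega

private lemma mag_eq' (j x : ℕ) (B : Fin (x + j + 1) → Bool) :
    mag j x B = (2 : ℚ) ^ ((1 : ℤ) - bias j - x) * (gval x (expo j x B) (mant j x B) : ℚ) := by
  unfold mag gval
  have h2 : (2 : ℚ) ≠ 0 := by norm_num
  split_ifs with h
  · rw [show (1 : ℤ) - bias j - x = (1 - bias j) + (-x) by ring, zpow_add₀ h2]
    ring
  · have he1 : 1 ≤ expo j x B := Nat.one_le_iff_ne_zero.mpr h
    push_cast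
    rw [← zpow_natCast (2:ℚ) (expo j x B - 1), Nat.cast_sub he1,
        ← zpow_natCast (2:ℚ) x]
    rw [show ((expo j x B : ℤ)) - bias j = ((1:ℤ) - bias j - x) + ((expo j x B : ℤ) - 1) + x by ring]
    rw [zpow_add₀ h2, zpow_add₀ h2, zpow_neg]
    have hx : (2:ℚ) ^ (x:ℤ) ≠ 0 := zpow_ne_zero _ h2
    field_simp
    ring

end FPaux

theorem fp_gt_iff_si_gt_pos' (j x : ℕ) (hj : 1 ≤ j) (X Y : Fin (x + j + 1) → Bool)
    (hsX : signBit j x X = false) (hsY : signBit j x Y = false) :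
    FP j x X > FP j x Y ↔ SI X > SI Y := by
  have hX : X (Fin.last (x + j)) = false := hsX
  have hY : Y (Fin.last (x + j)) = false := hsY
  have h1 : (FP j x X > FP j x Y) ↔ mag j x Y < mag j x X := by
    unfold FP
    rw [hsX, hsY]
    simp only [Bool.false_eq_true, if_false]
    rw [gt_iff_lt, Prod.Lex.lt_iff]
    simp
  have h2 : (SI X > SI Y) ↔ UI Y < UI X := by
    unfold SI
    rw [if_neg (by rw [hX]; simp), if_neg (by rw [hY]; simp)]
    exact_mod_cast Iff.rfl
  rw [h1, h2, UI_decomp' j x X hX, UI_decomp' j x Y hY, mag_eq', mag_eq']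
  have hc : (0:ℚ) < (2:ℚ) ^ ((1:ℤ) - bias j - x) := by positivity
  rw [mul_lt_mul_iff_right₀ hc, Nat.cast_lt]
  exact gval_gt_iff (mant_lt' j x X) (mant_lt' j x Y)

/-- on nonnegative floats (sign bit 0), the floating point ordering
coincides with the signed integer ordering of the same bits. -/
theorem fp_gt_iff_si_gt_pos (j x : ℕ) (hj : 1 ≤ j) (X Y : Fin (x + j + 1) → Bool)
    (hsX : signBit j x X = false) (hsY : signBit j x Y = false) :
    FP j x X > FP j x Y ↔ SI X > SI Y :=
  fp_gt_iff_si_gt_pos' j x hj X Y hsX hsY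
end

section
/- (Sign-flip reduction, Theorem 2 of the paper) For any two k-bit vectors X, Y, if SI(X) < 0 (equivalently the sign bit of X is 1), then FP(X) ≥ FP(Y) ↔ SI(Y ⊕ M) ≥ SI(X ⊕ M), where M is the mask with only the most significant bit set (i.e., X ⊕ M flips the sign bit of X, which corresponds to negating FP(X)). If SI(X) ≥ 0, then FP(X) ≥ FP(Y) ↔ SI(X) ≥ SI(Y). -/
/-! The `x + j` low bits of a float are the mantissa followed by the exponent, so read as an
unsigned number `n` they encode the magnitude through `(n / 2^x, n % 2^x)`, and the magnitude is
strictly increasing in `n` (the subnormal range joins the normal one at `2^(1 - bias)`). Hence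
the order of `FP` is the integer order of `±n` (with `-0 ↦ -1`), while two's complement reads the
same bits as `n` or `n - 2^(x+j)`; flipping the sign bit of a negative float turns its `SI` into
`n`, and comparing the resulting keys sign by sign gives the theorem. -/

lemma UI_succ {k : ℕ} (B : Fin (k + 1) → Bool) :
    UI B = UI (Fin.init B) + if B (Fin.last k) then 2 ^ k else 0 := by
  rw [UI, Fin.sum_univ_castSucc, Fin.val_last]
  rfl

lemma UI_lt {k : ℕ} (B : Fin k → Bool) : UI B < 2 ^ k := by
  induction k with
  | zero => simp [UI]
  | succ k ih =>
    have := ih (Fin.init B)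
    rw [UI_succ, pow_succ]
    split <;> omega

lemma SI_eq {k : ℕ} (B : Fin (k + 1) → Bool) :
    SI B = (if B (Fin.last k) then -2 ^ k else 0) + UI (Fin.init B) := by
  rw [SI]
  split
  case isTrue =>
    rw [show UI (Fin.init B) = ∑ i : Fin k, if B i.castSucc then 2 ^ (i : ℕ) else 0 from rfl]
    push_cast
    rfl
  case isFalse h => simp [UI_succ B, h]

lemma xorVec_mask_last {k : ℕ} (B : Fin (k + 1) → Bool) :
    xorVec B (mask k) (Fin.last k) = !B (Fin.last k) := by
  simp [xorVec, mask]

lemma init_xorVec_mask {k : ℕ} (B : Fin (k + 1) → Bool) :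
    Fin.init (xorVec B (mask k)) = Fin.init B := by
  funext i
  simp [Fin.init, xorVec, mask, (Fin.castSucc_lt_last i).ne]

section Magnitude

def magVal (b : ℤ) (x e m : ℕ) : ℚ :=
  if e = 0 then (2 : ℚ) ^ ((1 : ℤ) - b) * m * (2 : ℚ) ^ (-(x : ℤ))
  else (2 : ℚ) ^ ((e : ℤ) - b) * (1 + m * (2 : ℚ) ^ (-(x : ℤ)))

def magOfCode (b : ℤ) (x n : ℕ) : ℚ := magVal b x (n / 2 ^ x) (n % 2 ^ x)

variable (b : ℤ) (x : ℕ)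

lemma cast_mul_two_zpow_neg_lt_one {m : ℕ} (hm : m < 2 ^ x) : (m : ℚ) * 2 ^ (-(x : ℤ)) < 1 := by
  rw [zpow_neg, zpow_natCast, mul_inv_lt_iff₀ (by positivity), one_mul]
  exact_mod_cast hm

lemma magVal_lt_two_zpow (e : ℕ) {m : ℕ} (hm : m < 2 ^ x) :
    magVal b x e m < 2 ^ ((e : ℤ) + 1 - b) := by
  have hfrac := cast_mul_two_zpow_neg_lt_one x hm
  rw [magVal]
  split
  case isTrue he =>
    subst he
    calc (2 : ℚ) ^ (1 - b) * m * 2 ^ (-(x : ℤ))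
        _ = 2 ^ (1 - b) * (m * 2 ^ (-(x : ℤ))) := mul_assoc _ _ _
        _ < 2 ^ (1 - b) * 1 := by gcongr
        _ = 2 ^ (((0 : ℕ) : ℤ) + 1 - b) := by simp
  case isFalse =>
    calc (2 : ℚ) ^ ((e : ℤ) - b) * (1 + m * 2 ^ (-(x : ℤ))) < 2 ^ ((e : ℤ) - b) * 2 := by
          gcongr; linarith
      _ = 2 ^ ((e : ℤ) + 1 - b) := by
          rw [← zpow_add_one₀ two_ne_zero]; ring_nf

lemma two_zpow_le_magVal {e : ℕ} (he : e ≠ 0) (m : ℕ) :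
    (2 : ℚ) ^ ((e : ℤ) - b) ≤ magVal b x e m := by
  rw [magVal, if_neg he]
  exact le_mul_of_one_le_right (by positivity) (le_add_of_nonneg_right (by positivity))

lemma magVal_strictMono (e : ℕ) : StrictMono (magVal b x e) := by
  intro m₁ m₂ hm
  have hm' : (m₁ : ℚ) < m₂ := by exact_mod_cast hm
  unfold magVal
  split <;> gcongr

lemma magVal_lt_magVal_of_lt {e₁ e₂ m₁ : ℕ} (he : e₁ < e₂) (hm₁ : m₁ < 2 ^ x) (m₂ : ℕ) :
    magVal b x e₁ m₁ < magVal b x e₂ m₂ :=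
  calc magVal b x e₁ m₁ < 2 ^ ((e₁ : ℤ) + 1 - b) := magVal_lt_two_zpow b x e₁ hm₁
    _ ≤ 2 ^ ((e₂ : ℤ) - b) := zpow_le_zpow_right₀ one_le_two (by omega)
    _ ≤ magVal b x e₂ m₂ := two_zpow_le_magVal b x (by omega) m₂

lemma magOfCode_strictMono : StrictMono (magOfCode b x) := by
  intro n₁ n₂ hn
  have hdiv : n₁ / 2 ^ x ≤ n₂ / 2 ^ x := Nat.div_le_div_right hn.le
  rcases hdiv.lt_or_eq with hlt | heq
  · exact magVal_lt_magVal_of_lt b x hlt (Nat.mod_lt _ (by positivity)) _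
  · have hmod : n₁ % 2 ^ x < n₂ % 2 ^ x := by
      have h₁ := Nat.div_add_mod n₁ (2 ^ x)
      have h₂ := Nat.div_add_mod n₂ (2 ^ x)
      rw [heq] at h₁
      omega
    rw [magOfCode, magOfCode, heq]
    exact magVal_strictMono b x _ hmod

end Magnitude

section Float

variable {j x : ℕ}

lemma UI_init_eq (B : Fin (x + j + 1) → Bool) :
    UI (Fin.init B) = mant j x B + 2 ^ x * expo j x B := by
  rw [UI, Fin.sum_univ_add, expo, Finset.mul_sum]
  congr 1
  refine Finset.sum_congr rfl fun i _ => ?_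
  rw [mul_ite, mul_zero, ← pow_add]
  rfl

lemma mag_eq_magOfCode (B : Fin (x + j + 1) → Bool) :
    mag j x B = magOfCode (bias j) x (UI (Fin.init B)) := by
  have hm : mant j x B < 2 ^ x := UI_lt _
  rw [magOfCode, UI_init_eq, Nat.add_mul_div_left _ _ (by positivity),
    Nat.add_mul_mod_self_left, Nat.div_eq_of_lt hm, Nat.mod_eq_of_lt hm, zero_add]
  rfl

lemma mag_le_mag_iff (B₁ B₂ : Fin (x + j + 1) → Bool) :
    mag j x B₁ ≤ mag j x B₂ ↔ UI (Fin.init B₁) ≤ UI (Fin.init B₂) := by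
  rw [mag_eq_magOfCode, mag_eq_magOfCode]
  exact (magOfCode_strictMono _ _).le_iff_le

def fpKey {k : ℕ} (B : Fin (k + 1) → Bool) : ℤ :=
  if B (Fin.last k) then -1 - UI (Fin.init B) else UI (Fin.init B)

lemma FP_le_FP_iff (B₁ B₂ : Fin (x + j + 1) → Bool) :
    FP j x B₁ ≤ FP j x B₂ ↔ fpKey B₁ ≤ fpKey B₂ := by
  unfold FP fpKey signBit
  cases B₁ (Fin.last (x + j)) <;> cases B₂ (Fin.last (x + j)) <;>
    simp [Prod.Lex.toLex_le_toLex, mag_le_mag_iff] <;> omega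

end Float

theorem flint_sign_flip_general (j x : ℕ) (X Y : Fin (x + j + 1) → Bool) :
    (SI X < 0 →
      (FP j x X ≥ FP j x Y ↔
        SI (xorVec Y (mask (x + j))) ≥ SI (xorVec X (mask (x + j))))) ∧
    (SI X ≥ 0 → (FP j x X ≥ FP j x Y ↔ SI X ≥ SI Y)) := by
  have hX : (UI (Fin.init X) : ℤ) < 2 ^ (x + j) := mod_cast UI_lt _
  have hY : (UI (Fin.init Y) : ℤ) < 2 ^ (x + j) := mod_cast UI_lt _
  simp only [ge_iff_le, FP_le_FP_iff, fpKey, SI_eq, xorVec_mask_last, init_xorVec_mask]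
  cases X (Fin.last (x + j)) <;> cases Y (Fin.last (x + j)) <;> simp <;> omega

/-- Sign-flip reduction, Theorem 2 of the paper. -/
theorem flint_sign_flip (j x : ℕ) (hj : 1 ≤ j) (X Y : Fin (x + j + 1) → Bool) :
    (SI X < 0 →
      (FP j x X ≥ FP j x Y ↔
        SI (xorVec Y (mask (x + j))) ≥ SI (xorVec X (mask (x + j))))) ∧
    (SI X ≥ 0 → (FP j x X ≥ FP j x Y ↔ SI X ≥ SI Y)) :=
  flint_sign_flip_general j x X Y
end
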